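/- arXiv:1607.00845 — 6 statements merged into one kernel-verified Lean document; each statement's English description precedes it below -/
import Mathlib

section
/- Let λ_n = π^{2k}(2n+θ)^{2k}/ω^{2k} for n ∈ ℤ₊, with k ≥ 2 an integer, θ ∈ {0,1}, ω > 0. Then for every n ≥ 1, the reciprocal of the spectral gap satisfies 1/min_{j ≠ n, j ∈ ℤ₊} |λ_j - λ_n| ≤ ω^{2k} / (4 π^{2k} (2n-1)(2n+θ)^{2k-2}). -/
/-!
For `j ≠ n` put `a = 2j+θ`, `b = 2n+θ`. Then `|a - b| ≥ 2`, which gives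
`|a² - b²| ≥ 4(b - 1) ≥ 4(2n - 1)`, and `|a^{m+2} - b^{m+2}| ≥ |a² - b²| b^m` since the
difference of the two sides is `a²|a^m - b^m|`. With `m = 2k - 2` this bounds
every gap `|λ_j - λ_n|` below by `4π^{2k}(2n-1)(2n+θ)^{2k-2}/ω^{2k}`.
-/

open Real

theorem abs_sq_sub_sq_mul_pow_le {a b : ℝ} (ha : 0 ≤ a) (hb : 0 ≤ b) (m : ℕ) :
    |a ^ 2 - b ^ 2| * b ^ m ≤ |a ^ (m + 2) - b ^ (m + 2)| := by
  rw [pow_add a, pow_add b]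
  rcases le_total a b with hab | hab
  · have hpow : a ^ m ≤ b ^ m := pow_le_pow_left₀ ha hab m
    rw [abs_of_nonpos (by nlinarith), abs_of_nonpos (sub_nonpos.2 (by gcongr))]
    nlinarith [mul_le_mul_of_nonneg_left hpow (sq_nonneg a)]
  · have hpow : b ^ m ≤ a ^ m := pow_le_pow_left₀ hb hab m
    rw [abs_of_nonneg (by nlinarith), abs_of_nonneg (sub_nonneg.2 (by gcongr))]
    nlinarith [mul_le_mul_of_nonneg_left hpow (sq_nonneg a)]

theorem four_mul_sub_one_le_abs_sq_sub_sq {a b : ℝ} (ha : 0 ≤ a) (hb : 0 ≤ b)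
    (hab : 2 ≤ |a - b|) : 4 * (b - 1) ≤ |a ^ 2 - b ^ 2| := by
  rcases le_abs'.mp hab with h | h
  · rw [abs_of_nonpos (by nlinarith)]
    nlinarith
  · rw [abs_of_nonneg (by nlinarith)]
    nlinarith

theorem four_mul_two_mul_sub_one_mul_pow_le_abs_sub_pow (k θ : ℕ) (hk : 1 ≤ k) {j n : ℕ} (hjn : j ≠ n) :
    4 * (2 * n - 1 : ℝ) * (2 * n + θ : ℝ) ^ (2 * k - 2) ≤
      |(2 * j + θ : ℝ) ^ (2 * k) - (2 * n + θ : ℝ) ^ (2 * k)| := by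
  have hexp : 2 * k = 2 * k - 2 + 2 := by omega
  have hdist : 2 ≤ |(2 * j + θ : ℝ) - (2 * n + θ)| := by
    rcases hjn.lt_or_gt with h | h
    · have : (j : ℝ) + 1 ≤ n := by exact_mod_cast h
      rw [abs_of_neg (by linarith)]
      linarith
    · have : (n : ℝ) + 1 ≤ j := by exact_mod_cast h
      rw [abs_of_pos (by linarith)]
      linarith
  calc 4 * (2 * n - 1 : ℝ) * (2 * n + θ : ℝ) ^ (2 * k - 2)
      ≤ 4 * ((2 * n + θ : ℝ) - 1) * (2 * n + θ : ℝ) ^ (2 * k - 2) := by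
        gcongr; simp
    _ ≤ |(2 * j + θ : ℝ) ^ 2 - (2 * n + θ : ℝ) ^ 2| * (2 * n + θ : ℝ) ^ (2 * k - 2) := by
        gcongr
        exact four_mul_sub_one_le_abs_sq_sub_sq (by positivity) (by positivity) hdist
    _ ≤ |(2 * j + θ : ℝ) ^ (2 * k) - (2 * n + θ : ℝ) ^ (2 * k)| := by
        rw [hexp]
        simpa only [Nat.add_sub_cancel] using
          abs_sq_sub_sq_mul_pow_le (by positivity) (by positivity) (2 * k - 2)

theorem stmt_2_general (k : ℕ) (hk : 2 ≤ k) (θ : ℕ)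
    (ω : ℝ) (hω : 0 < ω) (n : ℕ) (hn : 1 ≤ n) :
    1 / (⨅ j : {j : ℕ // j ≠ n},
        |π ^ (2 * k) * (2 * (j : ℕ) + θ : ℝ) ^ (2 * k) / ω ^ (2 * k) -
          π ^ (2 * k) * (2 * n + θ : ℝ) ^ (2 * k) / ω ^ (2 * k)|) ≤
      ω ^ (2 * k) /
        (4 * π ^ (2 * k) * (2 * n - 1 : ℝ) * (2 * n + θ : ℝ) ^ (2 * k - 2)) := by
  have : Nonempty {j : ℕ // j ≠ n} := ⟨⟨n + 1, by omega⟩⟩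
  have hπ : 0 < π ^ (2 * k) := by positivity
  have hωk : 0 < ω ^ (2 * k) := by positivity
  have hn' : (0 : ℝ) < 2 * n - 1 := by
    have : (1 : ℝ) ≤ n := by exact_mod_cast hn
    linarith
  have hgap : 4 * π ^ (2 * k) * (2 * n - 1 : ℝ) * (2 * n + θ : ℝ) ^ (2 * k - 2) / ω ^ (2 * k) ≤
      ⨅ j : {j : ℕ // j ≠ n},
        |π ^ (2 * k) * (2 * (j : ℕ) + θ : ℝ) ^ (2 * k) / ω ^ (2 * k) -
          π ^ (2 * k) * (2 * n + θ : ℝ) ^ (2 * k) / ω ^ (2 * k)| := by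
    refine le_ciInf fun j => ?_
    rw [div_sub_div_same, ← mul_sub, abs_div, abs_mul, abs_of_pos hπ, abs_of_pos hωk,
      div_le_div_iff_of_pos_right hωk]
    have := mul_le_mul_of_nonneg_left (four_mul_two_mul_sub_one_mul_pow_le_abs_sub_pow k θ (by omega) j.2) hπ.le
    linarith
  simpa only [one_div_div] using one_div_le_one_div_of_le (by positivity) hgap

/-- For the eigenvalues `λ_n = π^{2k}(2n+θ)^{2k}/ω^{2k}` of the unperturbed operator,
the reciprocal of the spectral gap at `λ_n` satisfies
`1 / min_{j ≠ n} |λ_j - λ_n| ≤ ω^{2k} / (4π^{2k}(2n-1)(2n+θ)^{2k-2})`. -/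
theorem stmt_2 (k : ℕ) (hk : 2 ≤ k) (θ : ℕ) (hθ : θ = 0 ∨ θ = 1)
    (ω : ℝ) (hω : 0 < ω) (n : ℕ) (hn : 1 ≤ n) :
    1 / (⨅ j : {j : ℕ // j ≠ n},
        |π ^ (2 * k) * (2 * (j : ℕ) + θ : ℝ) ^ (2 * k) / ω ^ (2 * k) -
          π ^ (2 * k) * (2 * n + θ : ℝ) ^ (2 * k) / ω ^ (2 * k)|) ≤
      ω ^ (2 * k) /
        (4 * π ^ (2 * k) * (2 * n - 1 : ℝ) * (2 * n + θ : ℝ) ^ (2 * k - 2)) :=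
  stmt_2_general k hk θ ω hω n hn
end

section
/- Let (q_l)_{l∈ℤ} be a square-summable sequence of complex numbers with ‖q‖₂² = Σ_{l∈ℤ}|q_l|². Setting λ_s = π^{2k}(2s+θ)^{2k}/ω^{2k} for s ∈ ℤ (with k ≥ 2 integer, θ ∈ {0,1}, ω > 0), the double sum Σ_{s,j ∈ ℤ, λ_s ≠ λ_j} |q_{s-j}|²/|λ_s - λ_j|² is finite, and is bounded above by (ω^{4k} ‖q‖₂² / (4π^{4k})) · Σ_{s∈ℤ} (2s+θ)^{-(4k-2)}. -/
open Real
open scoped ENNReal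

/-!
All indices `n_s = 2s + θ` have the parity of `θ`, so `λ_s ≠ λ_j`, say `|n_j| < |n_s|`, forces
`|n_j| + 2 ≤ |n_s|`; then `|λ_s - λ_j| ≥ 2c|n_s|^{2k-1}` with `c = π^{2k}/ω^{2k}`, and the term
of `(s, j)` is at most `|q_{s-j}|² / (4c² n_s^{4k-2})`. Charge every pair to its index of larger
modulus. Only `(s, s - l)` and `(s + l, s)` could be charged to `s` with weight `|q_l|²`, and
at most one of them is, because `|n_s - 2l|` and `|n_s + 2l|` cannot both be smaller than `|n_s|`.
-/

section DominatedDoubleSum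

variable {G β : Type*} [AddCommGroup G] [LinearOrder β] {w : G → β}

lemma tsum_ite_sub_add_tsum_ite_add_le (hw : ∀ s l, w s ≤ max (w (s - l)) (w (s + l)))
    (Q : G → ℝ≥0∞) (s : G) :
    (∑' l, if w (s - l) < w s then Q l else 0) + (∑' l, if w (s + l) < w s then Q l else 0) ≤
      ∑' l, Q l := by
  rw [← ENNReal.tsum_add]
  refine ENNReal.tsum_le_tsum fun l => ?_
  split_ifs with h₁ h₂ h₂
  · exact absurd (hw s l) (not_le.2 (max_lt h₁ h₂))
  all_goals simp

lemma tsum_prod_ite_lt_eq (Q g : G → ℝ≥0∞) :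
    ∑' p : G × G, (if w p.2 < w p.1 then g p.1 * Q (p.1 - p.2) else 0) =
      ∑' s, g s * ∑' l, if w (s - l) < w s then Q l else 0 := by
  rw [ENNReal.tsum_prod']
  refine tsum_congr fun s => ?_
  rw [← ENNReal.tsum_mul_left, ← (Equiv.subLeft s).tsum_eq]
  simp [mul_ite]

lemma tsum_prod_ite_gt_eq (Q g : G → ℝ≥0∞) :
    ∑' p : G × G, (if w p.1 < w p.2 then g p.2 * Q (p.1 - p.2) else 0) =
      ∑' j, g j * ∑' l, if w (j + l) < w j then Q l else 0 := by
  rw [ENNReal.tsum_prod', ENNReal.tsum_comm]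
  refine tsum_congr fun j => ?_
  rw [← ENNReal.tsum_mul_left, ← (Equiv.addLeft j).tsum_eq]
  simp [mul_ite]

theorem ENNReal.tsum_prod_le_tsum_mul_tsum_of_weight
    (hw : ∀ s l, w s ≤ max (w (s - l)) (w (s + l))) (Q g : G → ℝ≥0∞) (f : G × G → ℝ≥0∞)
    (hlt : ∀ s j, w j < w s → f (s, j) ≤ Q (s - j) * g s)
    (hgt : ∀ s j, w s < w j → f (s, j) ≤ Q (s - j) * g j)
    (heq : ∀ s j, w s = w j → f (s, j) = 0) :
    ∑' p, f p ≤ (∑' l, Q l) * ∑' s, g s := by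
  have hsplit : ∀ p : G × G, f p ≤ (if w p.2 < w p.1 then g p.1 * Q (p.1 - p.2) else 0) +
      (if w p.1 < w p.2 then g p.2 * Q (p.1 - p.2) else 0) := by
    rintro ⟨s, j⟩
    rcases lt_trichotomy (w s) (w j) with h | h | h
    · simpa [h, h.not_gt, mul_comm] using hgt s j h
    · simp [heq s j h]
    · simpa [h, h.not_gt, mul_comm] using hlt s j h
  calc ∑' p, f p
      ≤ ∑' p : G × G, ((if w p.2 < w p.1 then g p.1 * Q (p.1 - p.2) else 0) +
          (if w p.1 < w p.2 then g p.2 * Q (p.1 - p.2) else 0)) := ENNReal.tsum_le_tsum hsplit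
    _ = ∑' s, g s * ((∑' l, if w (s - l) < w s then Q l else 0) +
          (∑' l, if w (s + l) < w s then Q l else 0)) := by
      simp_rw [mul_add, ENNReal.tsum_add, tsum_prod_ite_lt_eq, tsum_prod_ite_gt_eq]
    _ ≤ ∑' s, g s * ∑' l, Q l := by
      gcongr with s
      exact tsum_ite_sub_add_tsum_ite_add_le hw Q s
    _ = (∑' l, Q l) * ∑' s, g s := by rw [ENNReal.tsum_mul_right, mul_comm]

lemma summable_and_tsum_le_of_tsum_ofReal_le {α : Type*} {f : α → ℝ} (hf : ∀ a, 0 ≤ f a)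
    {B : ℝ} (hB : 0 ≤ B) (h : ∑' a, ENNReal.ofReal (f a) ≤ ENNReal.ofReal B) :
    Summable f ∧ ∑' a, f a ≤ B := by
  have hsum : Summable f := by
    simpa [ENNReal.toReal_ofReal (hf _)] using
      ENNReal.summable_toReal (h.trans_lt ENNReal.ofReal_lt_top).ne
  refine ⟨hsum, ?_⟩
  rwa [← ENNReal.ofReal_tsum_of_nonneg hf hsum, ENNReal.ofReal_le_ofReal_iff hB] at h

theorem summable_and_tsum_prod_le_tsum_mul_tsum_of_weight
    (hw : ∀ s l, w s ≤ max (w (s - l)) (w (s + l))) {Q g : G → ℝ} (hQ₀ : ∀ l, 0 ≤ Q l)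
    (hQ : Summable Q) (hg₀ : ∀ s, 0 ≤ g s) (hg : Summable g) {f : G × G → ℝ}
    (hf₀ : ∀ p, 0 ≤ f p)
    (hlt : ∀ s j, w j < w s → f (s, j) ≤ Q (s - j) * g s)
    (hgt : ∀ s j, w s < w j → f (s, j) ≤ Q (s - j) * g j)
    (heq : ∀ s j, w s = w j → f (s, j) = 0) :
    Summable f ∧ ∑' p, f p ≤ (∑' l, Q l) * ∑' s, g s := by
  have key := ENNReal.tsum_prod_le_tsum_mul_tsum_of_weight hw (ENNReal.ofReal ∘ Q)
    (ENNReal.ofReal ∘ g) (ENNReal.ofReal ∘ f)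
    (fun s j h => by simpa [ENNReal.ofReal_mul (hQ₀ _)] using ENNReal.ofReal_le_ofReal (hlt s j h))
    (fun s j h => by simpa [ENNReal.ofReal_mul (hQ₀ _)] using ENNReal.ofReal_le_ofReal (hgt s j h))
    (fun s j h => by simp [heq s j h])
  simp only [Function.comp_apply] at key
  rw [← ENNReal.ofReal_tsum_of_nonneg hQ₀ hQ, ← ENNReal.ofReal_tsum_of_nonneg hg₀ hg,
    ← ENNReal.ofReal_mul (tsum_nonneg hQ₀)] at key
  exact summable_and_tsum_le_of_tsum_ofReal_le hf₀
    (mul_nonneg (tsum_nonneg hQ₀) (tsum_nonneg hg₀)) key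

end DominatedDoubleSum

lemma sub_mul_pow_le_pow_succ_sub_pow_succ {R : Type*} [CommRing R] [PartialOrder R]
    [IsOrderedRing R] {x y : R} (hy : 0 ≤ y) (hyx : y ≤ x) (n : ℕ) :
    (x - y) * x ^ n ≤ x ^ (n + 1) - y ^ (n + 1) := by
  have : y * y ^ n ≤ y * x ^ n := mul_le_mul_of_nonneg_left (pow_le_pow_left₀ hy hyx n) hy
  rw [pow_succ', pow_succ']
  linear_combination this

lemma Int.abs_add_two_le_of_even_sub {a b : ℤ} (hab : Even (a - b)) (h : |b| < |a|) :
    |b| + 2 ≤ |a| := by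
  obtain ⟨r, hr⟩ := hab
  rw [abs_eq_max_neg, abs_eq_max_neg] at *
  omega

lemma abs_two_mul_add_le_max (θ s l : ℤ) :
    |2 * s + θ| ≤ max |2 * (s - l) + θ| |2 * (s + l) + θ| := by
  simp only [abs_eq_max_neg]
  omega

lemma one_div_sq_abs_mul_pow_sub_le {c : ℝ} (hc : 0 < c) {k : ℕ} (hk : 1 ≤ k) {a b : ℝ}
    (hab : |b| + 2 ≤ |a|) :
    1 / |c * a ^ (2 * k) - c * b ^ (2 * k)| ^ 2 ≤ 1 / (4 * c ^ 2) * (1 / a ^ (4 * k - 2)) := by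
  obtain ⟨m, rfl⟩ : ∃ m, k = m + 1 := ⟨k - 1, by omega⟩
  have ha : 0 < |a| := by linarith [abs_nonneg b]
  have hgap : 2 * |a| ^ (2 * m + 1) ≤ a ^ (2 * (m + 1)) - b ^ (2 * (m + 1)) := by
    rw [← (even_two_mul _).pow_abs a, ← (even_two_mul _).pow_abs b,
      show 2 * (m + 1) = 2 * m + 1 + 1 by ring]
    calc 2 * |a| ^ (2 * m + 1) ≤ (|a| - |b|) * |a| ^ (2 * m + 1) := by gcongr; linarith
      _ ≤ _ := sub_mul_pow_le_pow_succ_sub_pow_succ (abs_nonneg b) (by linarith) _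
  have hdiff : 2 * c * |a| ^ (2 * m + 1) ≤ |c * a ^ (2 * (m + 1)) - c * b ^ (2 * (m + 1))| := by
    rw [← mul_sub, abs_mul, abs_of_pos hc, mul_comm 2 c, mul_assoc]
    gcongr
    exact hgap.trans (le_abs_self _)
  calc 1 / |c * a ^ (2 * (m + 1)) - c * b ^ (2 * (m + 1))| ^ 2
      ≤ 1 / (2 * c * |a| ^ (2 * m + 1)) ^ 2 := by gcongr
    _ = 1 / (4 * c ^ 2) * (1 / a ^ (4 * (m + 1) - 2)) := by
      rw [show 4 * (m + 1) - 2 = 2 * (2 * m + 1) by omega, ← (even_two_mul _).pow_abs a,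
        pow_mul']
      field_simp
      ring

section OddEvenIndices

variable {k : ℕ} (θ : ℕ)

lemma one_div_sq_abs_sub_le_of_abs_lt {c : ℝ} (hc : 0 < c) (hk : 1 ≤ k) {s j : ℤ}
    (h : |2 * j + (θ : ℤ)| < |2 * s + θ|) :
    1 / |c * (2 * (s : ℝ) + θ) ^ (2 * k) - c * (2 * (j : ℝ) + θ) ^ (2 * k)| ^ 2 ≤
      1 / (4 * c ^ 2) *
        if 2 * s + (θ : ℤ) = 0 then 0 else 1 / (2 * (s : ℝ) + θ) ^ (4 * k - 2) := by
  have hs : 2 * s + (θ : ℤ) ≠ 0 := fun h₀ => by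
    rw [h₀, abs_zero] at h
    exact (abs_nonneg _).not_gt h
  have hgap : |2 * j + (θ : ℤ)| + 2 ≤ |2 * s + θ| :=
    Int.abs_add_two_le_of_even_sub ⟨s - j, by ring⟩ h
  rw [if_neg hs]
  exact one_div_sq_abs_mul_pow_sub_le hc hk (by exact_mod_cast hgap)

lemma summable_ite_one_div_two_mul_add_pow (hk : 1 ≤ k) :
    Summable fun s : ℤ =>
      if 2 * s + (θ : ℤ) = 0 then 0 else 1 / (2 * (s : ℝ) + θ) ^ (4 * k - 2) := by
  refine ((Real.summable_one_div_int_pow.mpr (by omega : 1 < 4 * k - 2)).comp_injective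
    (i := fun s : ℤ => 2 * s + (θ : ℤ)) fun a b h => by simp at h; omega).congr fun s => ?_
  simp only [Function.comp_apply]
  split_ifs with h₀
  · simp [h₀]
    omega
  · push_cast
    rfl

lemma ite_one_div_two_mul_add_pow_nonneg (s : ℤ) :
    0 ≤ if 2 * s + (θ : ℤ) = 0 then 0 else 1 / (2 * (s : ℝ) + θ) ^ (4 * k - 2) := by
  split_ifs
  exacts [le_rfl, one_div_nonneg.2 (Even.pow_nonneg ⟨2 * k - 1, by omega⟩ _)]

end OddEvenIndices

lemma ite_ne_div_sq_abs_sub_le {x y a b : ℝ} (ha : 0 ≤ a) (hb : 0 ≤ b)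
    (h : 1 / |x - y| ^ 2 ≤ b) : (if x ≠ y then a / |x - y| ^ 2 else 0) ≤ a * b := by
  split_ifs
  · rw [div_eq_mul_one_div]
    exact mul_le_mul_of_nonneg_left h ha
  · positivity

theorem stmt_3_general (k : ℕ) (hk : 2 ≤ k) (θ : ℕ)
    (ω : ℝ) (hω : 0 < ω) (q : ℤ → ℂ) (hq : Summable fun l : ℤ => ‖q l‖ ^ 2)
    (lam : ℤ → ℝ)
    (hlam : ∀ s : ℤ, lam s = π ^ (2 * k) * (2 * (s : ℝ) + θ) ^ (2 * k) / ω ^ (2 * k))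
    (F : ℤ × ℤ → ℝ)
    (hF : ∀ p : ℤ × ℤ, F p =
      if lam p.1 ≠ lam p.2 then ‖q (p.1 - p.2)‖ ^ 2 / |lam p.1 - lam p.2| ^ 2 else 0) :
    Summable F ∧
      ∑' p : ℤ × ℤ, F p ≤
        ω ^ (4 * k) * (∑' l : ℤ, ‖q l‖ ^ 2) / (4 * π ^ (4 * k)) *
          ∑' s : ℤ, (if (2 * s + (θ : ℤ)) = 0 then 0
            else 1 / (2 * (s : ℝ) + θ) ^ (4 * k - 2)) := by
  set c := π ^ (2 * k) / ω ^ (2 * k) with hc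
  set g : ℤ → ℝ := fun s =>
    1 / (4 * c ^ 2) * if 2 * s + (θ : ℤ) = 0 then 0 else 1 / (2 * (s : ℝ) + θ) ^ (4 * k - 2)
  have hk₁ : 1 ≤ k := by omega
  have hlam' : ∀ s : ℤ, lam s = c * (2 * (s : ℝ) + θ) ^ (2 * k) := fun s => by
    rw [hlam]
    ring
  have hg₀ : ∀ s, 0 ≤ g s := fun s =>
    mul_nonneg (by positivity) (ite_one_div_two_mul_add_pow_nonneg θ s)
  have hgap : ∀ s j : ℤ, |2 * j + (θ : ℤ)| < |2 * s + θ| → 1 / |lam s - lam j| ^ 2 ≤ g s :=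
    fun s j h => by
      simpa only [hlam'] using one_div_sq_abs_sub_le_of_abs_lt θ (by positivity) hk₁ h
  have heq : ∀ s j : ℤ, |2 * s + (θ : ℤ)| = |2 * j + θ| → lam s = lam j := fun s j h => by
    have h' : |2 * (s : ℝ) + θ| = |2 * (j : ℝ) + θ| := by exact_mod_cast h
    rw [hlam', hlam', ← (even_two_mul k).pow_abs, h', (even_two_mul k).pow_abs]
  obtain ⟨hsum, hle⟩ := summable_and_tsum_prod_le_tsum_mul_tsum_of_weight
    (w := fun s : ℤ => |2 * s + (θ : ℤ)|) (f := F) (abs_two_mul_add_le_max θ)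
    (fun l => by positivity) hq hg₀ ((summable_ite_one_div_two_mul_add_pow θ hk₁).mul_left _)
    (fun p => by rw [hF]; split_ifs <;> positivity)
    (fun s j h => by
      rw [hF]
      exact ite_ne_div_sq_abs_sub_le (sq_nonneg _) (hg₀ s) (hgap s j h))
    (fun s j h => by
      rw [hF]
      exact ite_ne_div_sq_abs_sub_le (sq_nonneg _) (hg₀ j) (abs_sub_comm (lam s) _ ▸ hgap j s h))
    (fun s j h => by rw [hF, if_neg (not_not.2 (heq s j h))])
  refine ⟨hsum, hle.trans_eq ?_⟩
  rw [tsum_mul_left, hc, div_pow, ← pow_mul, ← pow_mul, show 2 * k * 2 = 4 * k by ring]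
  field_simp

/-- For `q ∈ ℓ²(ℤ)` and `λ_s = π^{2k}(2s+θ)^{2k}/ω^{2k}`, the double sum
`Σ_{λ_s ≠ λ_j} |q_{s-j}|²/|λ_s-λ_j|²` converges and is bounded by
`(ω^{4k}‖q‖₂²/(4π^{4k})) Σ_s (2s+θ)^{-(4k-2)}` (the term with `2s+θ = 0` omitted). -/
theorem stmt_3 (k : ℕ) (hk : 2 ≤ k) (θ : ℕ) (hθ : θ = 0 ∨ θ = 1)
    (ω : ℝ) (hω : 0 < ω) (q : ℤ → ℂ) (hq : Summable fun l : ℤ => ‖q l‖ ^ 2)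
    (lam : ℤ → ℝ)
    (hlam : ∀ s : ℤ, lam s = π ^ (2 * k) * (2 * (s : ℝ) + θ) ^ (2 * k) / ω ^ (2 * k))
    (F : ℤ × ℤ → ℝ)
    (hF : ∀ p : ℤ × ℤ, F p =
      if lam p.1 ≠ lam p.2 then ‖q (p.1 - p.2)‖ ^ 2 / |lam p.1 - lam p.2| ^ 2 else 0) :
    Summable F ∧
      ∑' p : ℤ × ℤ, F p ≤
        ω ^ (4 * k) * (∑' l : ℤ, ‖q l‖ ^ 2) / (4 * π ^ (4 * k)) *
          ∑' s : ℤ, (if (2 * s + (θ : ℤ)) = 0 then 0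
            else 1 / (2 * (s : ℝ) + θ) ^ (4 * k - 2)) :=
  stmt_3_general k hk θ ω hω q hq lam hlam F hF
end

section
/- Let H be a complex Hilbert space with orthonormal basis (g_n)_{n∈J} and P_n the rank-one orthogonal projections onto span(g_n). For X a Hilbert–Schmidt operator, define JX = Σ_n P_n X P_n and ΓX = Σ_{s≠j} P_s X P_j/(λ_s - λ_j), where (λ_n) are distinct reals with δ = min_{s≠j}|λ_s - λ_j| > 0. Then J is an orthogonal projection on the Hilbert space of Hilbert–Schmidt operators with ‖J‖ = 1, Γ is a bounded self-adjoint transformer with ‖Γ‖ ≤ 1/δ, and for X with (ΓX)D(A) ⊂ D(A) one has A(ΓX)x - (ΓX)Ax = Xx - (JX)x for x ∈ D(A), where A is the self-adjoint operator with Ag_n = λ_n g_n. -/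
/-!
In matrix coefficients, `J` and `Γ` are multiplication operators on `ℓ²(ℕ × ℕ)` by bounded
symbols: the indicator of the diagonal, and `(λ_s - λ_j)⁻¹` off the diagonal, which the spectral
gap bounds by `1 / δ`. A multiplier by `m ∈ ℓ^∞` has norm `‖m‖` and adjoint the multiplier by
`star m`, so an idempotent real symbol gives an orthogonal projection and a real symbol a
self-adjoint operator. The commutator identity is the entrywise cancellation
`(λ_s - λ_j) X_{sj} / (λ_s - λ_j) = X_{sj}` for `s ≠ j`.
-/

open scoped ENNReal

namespace lp

variable {α 𝕜 : Type*} {E : α → Type*} [RCLike 𝕜] [∀ i, NormedAddCommGroup (E i)]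
  [∀ i, NormedSpace 𝕜 (E i)] {p : ℝ≥0∞}

theorem memℓp_infty_smul (m : ℓ^∞(α, 𝕜)) (f : lp E p) : Memℓp (fun i => m i • f i) p :=
  ((lp.memℓp f).norm.const_mul ‖m‖).mono fun i =>
    (norm_smul_le _ _).trans <| mul_le_mul_of_nonneg_right
      (norm_apply_le_norm ENNReal.top_ne_zero m i) (norm_nonneg _)

variable [Fact (1 ≤ p)]

noncomputable def mulCLM (m : ℓ^∞(α, 𝕜)) : lp E p →L[𝕜] lp E p :=
  LinearMap.mkContinuous
    { toFun f := ⟨fun i => m i • f i, memℓp_infty_smul m f⟩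
      map_add' f g := lp.ext <| funext fun i => smul_add (m i) (f i) (g i)
      map_smul' c f := lp.ext <| funext fun i => smul_comm (m i) c (f i) }
    ‖m‖ fun f => by
      have hp : p ≠ 0 := (zero_lt_one.trans_le Fact.out).ne'
      calc _ ≤ ‖((‖m‖ : ℝ) : 𝕜) • f‖ := norm_mono hp fun i => by
              simp only [LinearMap.coe_mk, AddHom.coe_mk, coeFn_smul, Pi.smul_apply, norm_smul,
                RCLike.norm_ofReal, abs_norm]
              exact mul_le_mul_of_nonneg_right (norm_apply_le_norm ENNReal.top_ne_zero m i)
                (norm_nonneg _)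
        _ = ‖m‖ * ‖f‖ := by rw [norm_const_smul hp, RCLike.norm_ofReal, abs_norm]

@[simp]
theorem mulCLM_apply (m : ℓ^∞(α, 𝕜)) (f : lp E p) (i : α) : mulCLM m f i = m i • f i := rfl

theorem norm_mulCLM_le (m : ℓ^∞(α, 𝕜)) : ‖(mulCLM m : lp E p →L[𝕜] lp E p)‖ ≤ ‖m‖ :=
  LinearMap.mkContinuous_norm_le _ (norm_nonneg m) _

theorem mulCLM_mul (m n : ℓ^∞(α, 𝕜)) :
    (mulCLM (m * n) : lp E p →L[𝕜] lp E p) = (mulCLM m).comp (mulCLM n) := by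
  ext f i
  simp [infty_coeFn_mul, mul_smul]

theorem mulCLM_single [DecidableEq α] (m : ℓ^∞(α, 𝕜)) (i : α) (x : E i) :
    mulCLM m (lp.single p i x) = lp.single p i (m i • x) := by
  ext j
  rcases eq_or_ne j i with rfl | h
  · simp
  · simp [h]

theorem norm_mulCLM [∀ i, Nontrivial (E i)] (m : ℓ^∞(α, 𝕜)) :
    ‖(mulCLM m : lp E p →L[𝕜] lp E p)‖ = ‖m‖ := by
  classical
  refine (norm_mulCLM_le m).antisymm (norm_le_of_forall_le (norm_nonneg _) fun i => ?_)
  obtain ⟨x, hx⟩ := exists_ne (0 : E i)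
  have hp : 0 < p := zero_lt_one.trans_le Fact.out
  have := (mulCLM m : lp E p →L[𝕜] lp E p).le_opNorm (lp.single p i x)
  rw [mulCLM_single, lp.norm_single hp, lp.norm_single hp, norm_smul] at this
  exact le_of_mul_le_mul_right this (norm_pos_iff.mpr hx)

theorem inner_mulCLM_left {F : α → Type*} [∀ i, NormedAddCommGroup (F i)]
    [∀ i, InnerProductSpace 𝕜 (F i)] (m : ℓ^∞(α, 𝕜)) (f g : lp F 2) :
    inner 𝕜 (mulCLM m f) g = inner 𝕜 f (mulCLM (star m) g) := by
  simp only [inner_eq_tsum, mulCLM_apply, inner_smul_left, inner_smul_right, lp.star_apply,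
    RCLike.star_def]

theorem inner_mulCLM_left_of_isSelfAdjoint {F : α → Type*} [∀ i, NormedAddCommGroup (F i)]
    [∀ i, InnerProductSpace 𝕜 (F i)] {m : ℓ^∞(α, 𝕜)} (hm : IsSelfAdjoint m) (f g : lp F 2) :
    inner 𝕜 (mulCLM m f) g = inner 𝕜 f (mulCLM m g) := by
  rw [inner_mulCLM_left, hm.star_eq]

end lp

open lp

section Transformers

variable {ι 𝕜 : Type*} [RCLike 𝕜]

theorem le_norm_ofReal_sub_of_gap {lam : ι → ℝ} {δ : ℝ}
    (hgap : ∀ s j, s ≠ j → δ ≤ |lam s - lam j|) {s j : ι} (h : s ≠ j) :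
    δ ≤ ‖(lam s : 𝕜) - lam j‖ := by
  rw [← RCLike.ofReal_sub, RCLike.norm_ofReal]
  exact hgap s j h

theorem norm_inv_ofReal_sub_le_of_gap {lam : ι → ℝ} {δ : ℝ} (hδ : 0 < δ)
    (hgap : ∀ s j, s ≠ j → δ ≤ |lam s - lam j|) {s j : ι} (h : s ≠ j) :
    ‖((lam s : 𝕜) - lam j)⁻¹‖ ≤ δ⁻¹ := by
  rw [norm_inv]
  exact inv_anti₀ hδ (le_norm_ofReal_sub_of_gap hgap h)

variable [DecidableEq ι]

variable (ι 𝕜) in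
noncomputable def diagIndicator : ℓ^∞(ι × ι, 𝕜) :=
  ⟨fun q => if q.1 = q.2 then 1 else 0,
    memℓp_infty ⟨1, by rintro _ ⟨q, rfl⟩; dsimp only; split_ifs <;> simp⟩⟩

theorem diagIndicator_apply (q : ι × ι) :
    diagIndicator ι 𝕜 q = if q.1 = q.2 then 1 else 0 := rfl

theorem diagIndicator_mul_self : diagIndicator ι 𝕜 * diagIndicator ι 𝕜 = diagIndicator ι 𝕜 := by
  ext q
  simp only [infty_coeFn_mul, Pi.mul_apply, diagIndicator_apply]
  split_ifs <;> simp

theorem isSelfAdjoint_diagIndicator : IsSelfAdjoint (diagIndicator ι 𝕜) := by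
  ext q
  simp only [lp.star_apply, diagIndicator_apply]
  split_ifs <;> simp

theorem norm_diagIndicator [Nonempty ι] : ‖diagIndicator ι 𝕜‖ = 1 := by
  obtain ⟨i⟩ := ‹Nonempty ι›
  refine (norm_le_of_forall_le zero_le_one fun q => ?_).antisymm ?_
  · rw [diagIndicator_apply]; split_ifs <;> simp
  · simpa [diagIndicator_apply] using
      norm_apply_le_norm ENNReal.top_ne_zero (diagIndicator ι 𝕜) (i, i)

theorem mulCLM_diagIndicator_apply (X : ℓ^2(ι × ι, 𝕜)) (s j : ι) :
    mulCLM (diagIndicator ι 𝕜) X (s, j) = if s = j then X (s, j) else 0 := by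
  simp only [mulCLM_apply, diagIndicator_apply, smul_eq_mul, ite_mul, one_mul, zero_mul]

variable (𝕜) in
noncomputable def invDiff (lam : ι → ℝ) {δ : ℝ} (hδ : 0 < δ)
    (hgap : ∀ s j, s ≠ j → δ ≤ |lam s - lam j|) : ℓ^∞(ι × ι, 𝕜) :=
  ⟨fun q => if q.1 = q.2 then 0 else ((lam q.1 : 𝕜) - lam q.2)⁻¹,
    memℓp_infty ⟨δ⁻¹, by
      rintro _ ⟨q, rfl⟩
      dsimp only
      split_ifs with h
      · simpa using hδ.le
      · exact norm_inv_ofReal_sub_le_of_gap hδ hgap h⟩⟩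

variable {lam : ι → ℝ} {δ : ℝ} (hδ : 0 < δ) (hgap : ∀ s j, s ≠ j → δ ≤ |lam s - lam j|)

theorem invDiff_apply (q : ι × ι) :
    invDiff 𝕜 lam hδ hgap q = if q.1 = q.2 then 0 else ((lam q.1 : 𝕜) - lam q.2)⁻¹ := rfl

theorem norm_invDiff_le : ‖invDiff 𝕜 lam hδ hgap‖ ≤ δ⁻¹ := by
  refine norm_le_of_forall_le (inv_nonneg.2 hδ.le) fun ⟨s, j⟩ => ?_
  rw [invDiff_apply]
  split_ifs with h
  · simpa using hδ.le
  · exact norm_inv_ofReal_sub_le_of_gap hδ hgap h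

theorem isSelfAdjoint_invDiff : IsSelfAdjoint (invDiff 𝕜 lam hδ hgap) := by
  ext q
  simp only [lp.star_apply, invDiff_apply]
  split_ifs <;> simp

theorem mulCLM_invDiff_apply (X : ℓ^2(ι × ι, 𝕜)) (s j : ι) :
    mulCLM (invDiff 𝕜 lam hδ hgap) X (s, j) =
      if s = j then 0 else X (s, j) / ((lam s : 𝕜) - lam j) := by
  simp only [mulCLM_apply, invDiff_apply, smul_eq_mul, ite_mul, zero_mul, inv_mul_eq_div]

theorem commutator_mulCLM_invDiff_apply (X : ℓ^2(ι × ι, 𝕜)) (s j : ι) :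
    (lam s : 𝕜) * mulCLM (invDiff 𝕜 lam hδ hgap) X (s, j)
        - mulCLM (invDiff 𝕜 lam hδ hgap) X (s, j) * lam j =
      X (s, j) - mulCLM (diagIndicator ι 𝕜) X (s, j) := by
  rw [mulCLM_invDiff_apply, mulCLM_diagIndicator_apply]
  rcases eq_or_ne s j with rfl | h
  · simp
  · have hne : (lam s : 𝕜) - lam j ≠ 0 :=
      norm_pos_iff.mp (hδ.trans_le (le_norm_ofReal_sub_of_gap hgap h))
    rw [if_neg h, if_neg h]
    field_simp
    ring

end Transformers

theorem stmt_10_general (lam : ℕ → ℝ)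
    (δ : ℝ) (hδ : 0 < δ) (hgap : ∀ s j : ℕ, s ≠ j → δ ≤ |lam s - lam j|) :
    ∃ Jmap Γmap : lp (fun _ : ℕ × ℕ => ℂ) 2 →L[ℂ] lp (fun _ : ℕ × ℕ => ℂ) 2,
      (∀ (X : lp (fun _ : ℕ × ℕ => ℂ) 2) (s j : ℕ),
        Jmap X (s, j) = if s = j then X (s, j) else 0) ∧
      (∀ (X : lp (fun _ : ℕ × ℕ => ℂ) 2) (s j : ℕ),
        Γmap X (s, j) = if s = j then 0 else X (s, j) / ((lam s : ℂ) - (lam j : ℂ))) ∧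
      Jmap.comp Jmap = Jmap ∧ ‖Jmap‖ = 1 ∧
      (∀ X Y : lp (fun _ : ℕ × ℕ => ℂ) 2,
        (inner ℂ (Jmap X) Y : ℂ) = inner ℂ X (Jmap Y)) ∧
      (∀ X Y : lp (fun _ : ℕ × ℕ => ℂ) 2,
        (inner ℂ (Γmap X) Y : ℂ) = inner ℂ X (Γmap Y)) ∧
      ‖Γmap‖ ≤ 1 / δ ∧
      (∀ (X : lp (fun _ : ℕ × ℕ => ℂ) 2) (s j : ℕ),
        (lam s : ℂ) * Γmap X (s, j) - Γmap X (s, j) * (lam j : ℂ) =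
          X (s, j) - Jmap X (s, j)) := by
  refine ⟨mulCLM (diagIndicator ℕ ℂ), mulCLM (invDiff ℂ lam hδ hgap),
    mulCLM_diagIndicator_apply, mulCLM_invDiff_apply hδ hgap, ?_, ?_,
    inner_mulCLM_left_of_isSelfAdjoint isSelfAdjoint_diagIndicator,
    inner_mulCLM_left_of_isSelfAdjoint (isSelfAdjoint_invDiff hδ hgap), ?_,
    commutator_mulCLM_invDiff_apply hδ hgap⟩
  · rw [← mulCLM_mul, diagIndicator_mul_self]
  · rw [norm_mulCLM, norm_diagIndicator]
  · rw [one_div]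
    exact (norm_mulCLM_le _).trans (norm_invDiff_le hδ hgap)

/-- The transformers `J` (diagonal part) and `Γ` (division of off-diagonal matrix
entries by `λ_s - λ_j`) on the Hilbert space of Hilbert–Schmidt operators, realized
through matrix coefficients as the space `ℓ²(ℕ×ℕ)`: `J` is an orthogonal projection
of norm one, `Γ` is bounded self-adjoint with `‖Γ‖ ≤ 1/δ`, and the commutator
identity `λ_s (ΓX)_{sj} - (ΓX)_{sj} λ_j = X_{sj} - (JX)_{sj}` (the matrix form of
`A(ΓX) - (ΓX)A = X - JX` for `A g_n = λ_n g_n`) holds. -/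
theorem stmt_10 (lam : ℕ → ℝ) (hdist : ∀ s j : ℕ, s ≠ j → lam s ≠ lam j)
    (δ : ℝ) (hδ : 0 < δ) (hgap : ∀ s j : ℕ, s ≠ j → δ ≤ |lam s - lam j|) :
    ∃ Jmap Γmap : lp (fun _ : ℕ × ℕ => ℂ) 2 →L[ℂ] lp (fun _ : ℕ × ℕ => ℂ) 2,
      (∀ (X : lp (fun _ : ℕ × ℕ => ℂ) 2) (s j : ℕ),
        Jmap X (s, j) = if s = j then X (s, j) else 0) ∧
      (∀ (X : lp (fun _ : ℕ × ℕ => ℂ) 2) (s j : ℕ),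
        Γmap X (s, j) = if s = j then 0 else X (s, j) / ((lam s : ℂ) - (lam j : ℂ))) ∧
      Jmap.comp Jmap = Jmap ∧ ‖Jmap‖ = 1 ∧
      (∀ X Y : lp (fun _ : ℕ × ℕ => ℂ) 2,
        (inner ℂ (Jmap X) Y : ℂ) = inner ℂ X (Jmap Y)) ∧
      (∀ X Y : lp (fun _ : ℕ × ℕ => ℂ) 2,
        (inner ℂ (Γmap X) Y : ℂ) = inner ℂ X (Γmap Y)) ∧
      ‖Γmap‖ ≤ 1 / δ ∧
      (∀ (X : lp (fun _ : ℕ × ℕ => ℂ) 2) (s j : ℕ),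
        (lam s : ℂ) * Γmap X (s, j) - Γmap X (s, j) * (lam j : ℂ) =
          X (s, j) - Jmap X (s, j)) :=
  stmt_10_general lam δ hδ hgap
end

section
/- In the setting of the admissible triple on Hilbert–Schmidt operators with eigenvalues λ_{n,dir} = π^{2k}n^{2k}/ω^{2k} and transformers J_{m,dir}, Γ_{m,dir}, the operator norm estimate ‖Γ_{m,dir}‖ ≤ ω^{2k}/(π^{2k}(2m+1)m^{2k-2}) holds for every m ∈ ℕ. -/
/-!
Off the diagonal and outside the `m × m` corner one of the indices is at least `m + 1`, and
`(m + 1)^{2k} - m^{2k} ≥ (2m + 1) m^{2k-2}` bounds every such eigenvalue gap from below. Hence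
`Γ_{m,dir}` is a diagonal multiplier on `ℓ²(ℕ × ℕ)` whose coefficients, and hence whose norm, are
bounded by the inverse of that gap.
-/

open Real

theorem Nat.pow_add_mul_pow_le_pow_of_lt {a b m : ℕ} (n : ℕ) (hba : b < a) (hma : m < a) :
    b ^ (n + 2) + (2 * m + 1) * m ^ n ≤ a ^ (n + 2) := by
  set c := max b m
  calc b ^ (n + 2) + (2 * m + 1) * m ^ n
      ≤ c ^ (n + 2) + (2 * c + 1) * c ^ n := by
        gcongr
        exacts [le_max_left _ _, le_max_right _ _, le_max_right _ _]
    _ = (c + 1) ^ 2 * c ^ n := by ring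
    _ ≤ (c + 1) ^ 2 * (c + 1) ^ n := by gcongr; omega
    _ = (c + 1) ^ (n + 2) := by ring
    _ ≤ a ^ (n + 2) := by gcongr; omega

noncomputable def dirichletEigenvalue (k : ℕ) (ω : ℝ) (n : ℕ) : ℝ :=
  π ^ (2 * k) * ((n : ℝ) + 1) ^ (2 * k) / ω ^ (2 * k)

theorem dirichletEigenvalue_gap_le_sub {k m s j : ℕ} {ω : ℝ} (hk : 1 ≤ k) (hω : 0 < ω)
    (hjs : j < s) (hms : m ≤ s) :
    π ^ (2 * k) * (2 * m + 1) * (m : ℝ) ^ (2 * k - 2) / ω ^ (2 * k) ≤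
      dirichletEigenvalue k ω s - dirichletEigenvalue k ω j := by
  obtain ⟨n, hn⟩ : ∃ n, 2 * k = n + 2 := ⟨2 * k - 2, by omega⟩
  have hgap : ((j : ℝ) + 1) ^ (n + 2) + (2 * m + 1) * (m : ℝ) ^ n ≤ ((s : ℝ) + 1) ^ (n + 2) := by
    exact_mod_cast Nat.pow_add_mul_pow_le_pow_of_lt n (Nat.succ_lt_succ hjs) (Nat.lt_succ_of_le hms)
  simp only [dirichletEigenvalue, hn, Nat.add_sub_cancel]
  rw [← sub_div, ← mul_sub, mul_assoc]
  gcongr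
  linarith

theorem dirichletEigenvalue_gap_le_abs_sub {k m s j : ℕ} {ω : ℝ} (hk : 1 ≤ k) (hω : 0 < ω)
    (hsj : s ≠ j) (hm : m ≤ max s j) :
    π ^ (2 * k) * (2 * m + 1) * (m : ℝ) ^ (2 * k - 2) / ω ^ (2 * k) ≤
      |dirichletEigenvalue k ω s - dirichletEigenvalue k ω j| := by
  rcases hsj.lt_or_gt with hlt | hgt
  · rw [abs_sub_comm]
    exact (dirichletEigenvalue_gap_le_sub hk hω hlt (by omega)).trans (le_abs_self _)
  · exact (dirichletEigenvalue_gap_le_sub hk hω hgt (by omega)).trans (le_abs_self _)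

/-- Norm bound for the truncated transformer `Γ_{m,dir}` for the Dirichlet eigenvalues
`λ_n = π^{2k}n^{2k}/ω^{2k}` (`n ≥ 1`), realized on matrix coefficients in `ℓ²(ℕ×ℕ)`
(index `n` encodes the eigenvalue number `n+1`): `Γ_{m,dir}` kills the diagonal and the
upper-left `m × m` corner, divides the remaining entries by `λ_s - λ_j`, and satisfies
`‖Γ_{m,dir}‖ ≤ ω^{2k}/(π^{2k}(2m+1)m^{2k-2})`. -/
theorem stmt_11 (k : ℕ) (hk : 2 ≤ k) (ω : ℝ) (hω : 0 < ω) (m : ℕ) (hm : 1 ≤ m)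
    (lam : ℕ → ℝ)
    (hlam : ∀ n : ℕ, lam n = π ^ (2 * k) * ((n : ℝ) + 1) ^ (2 * k) / ω ^ (2 * k)) :
    ∃ Γm : lp (fun _ : ℕ × ℕ => ℂ) 2 →L[ℂ] lp (fun _ : ℕ × ℕ => ℂ) 2,
      (∀ (X : lp (fun _ : ℕ × ℕ => ℂ) 2) (s j : ℕ),
        Γm X (s, j) = if s = j ∨ (s < m ∧ j < m) then 0
          else X (s, j) / ((lam s : ℂ) - (lam j : ℂ))) ∧
      ‖Γm‖ ≤ ω ^ (2 * k) / (π ^ (2 * k) * (2 * m + 1) * (m : ℝ) ^ (2 * k - 2)) := by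
  obtain rfl : lam = dirichletEigenvalue k ω := funext hlam
  set δ := π ^ (2 * k) * (2 * m + 1) * (m : ℝ) ^ (2 * k - 2) / ω ^ (2 * k)
  have hδ : 0 < δ := by positivity
  let c : ℕ × ℕ → ℂ := fun p => if p.1 = p.2 ∨ (p.1 < m ∧ p.2 < m) then 0
    else ((dirichletEigenvalue k ω p.1 : ℂ) - dirichletEigenvalue k ω p.2)⁻¹
  have hc : ∀ p, ‖ContinuousLinearMap.toSpanSingleton ℂ (c p)‖ ≤ δ⁻¹ := by
    rintro ⟨s, j⟩
    rw [ContinuousLinearMap.norm_toSpanSingleton]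
    by_cases hsj : s = j ∨ (s < m ∧ j < m)
    · simp [c, hsj, hδ.le]
    · simp only [c, if_neg hsj, ← Complex.ofReal_sub, norm_inv, Complex.norm_real,
        Real.norm_eq_abs]
      exact inv_anti₀ hδ
        (dirichletEigenvalue_gap_le_abs_sub (by omega) hω (fun h => hsj (.inl h)) (by omega))
  refine ⟨lp.mapCLM 2 _ (inv_nonneg.2 hδ.le) hc, fun X s j => ?_, ?_⟩
  · simp only [lp.mapCLM_apply_coe, ContinuousLinearMap.toSpanSingleton_apply, smul_eq_mul, c]
    split_ifs <;> simp [div_eq_mul_inv]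
  · rw [← inv_div]
    exact lp.norm_mapCLM_le 2 _ _ hc
end

section
/- Abstract similarity theorem: Let A: D(A) ⊂ H → H be a closed linear operator, (U, J, Γ) an admissible triple for A with ‖Γ‖ ≤ γ, and B ∈ U with ‖J‖·‖B‖·‖Γ‖ < 1/4. Then the map Φ(X) = BΓX - (ΓX)(JB) - (ΓX)J(BΓX) + B is a contraction on the closed ball {X ∈ U : ‖X - B‖ ≤ 3‖B‖}, hence has a unique fixed point X* there, and I + ΓX* is invertible in End(H). -/
/-!
For `X, Y` in the ball `‖X - B‖ ≤ 3‖B‖` one has `‖X‖, ‖Y‖ ≤ 4‖B‖`, and expanding `Φ X - Φ Y`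
bilinearly bounds it by `(2q + 8q²)‖X - Y‖` with `q = ‖J‖‖B‖γ < 1/4`; since `Φ 0 = B`, the
same estimate with `Y = 0` shows that `Φ` maps the ball into itself. Banach's fixed-point theorem
gives the unique fixed point, and `‖ΓX‖ ≤ 4q < 1` makes `I + ΓX` invertible by the Neumann series.
-/

open Metric Set

theorem one_le_norm_of_isIdempotentElem {R : Type*} [NormedRing R] {p : R}
    (hp : IsIdempotentElem p) (hp0 : p ≠ 0) : 1 ≤ ‖p‖ := by
  have hpos : 0 < ‖p‖ := norm_pos_iff.mpr hp0
  have h := norm_mul_le p p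
  rw [hp.eq] at h
  nlinarith

theorem isUnit_one_add_of_norm_lt_one {R : Type*} [NormedRing R] [HasSummableGeomSeries R]
    {x : R} (hx : ‖x‖ < 1) : IsUnit (1 + x) := by
  have h := (Units.oneSub (-x) (by rwa [norm_neg])).isUnit
  rwa [Units.val_oneSub, sub_neg_eq_add] at h

theorem existsUnique_fixedPoint_of_dist_le {α : Type*} [MetricSpace α] {s : Set α}
    (hsc : IsComplete s) (hne : s.Nonempty) {f : α → α} (hsf : MapsTo f s s) {c : ℝ} (hc : c < 1)
    (hf : ∀ x ∈ s, ∀ y ∈ s, dist (f x) (f y) ≤ c * dist x y) :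
    ∃! x, x ∈ s ∧ f x = x := by
  obtain ⟨x₀, hx₀⟩ := hne
  have hK : ContractingWith c.toNNReal (hsf.restrict f s s) := by
    refine ⟨by simpa using hc, LipschitzWith.of_dist_le_mul fun x y => ?_⟩
    calc dist (f x) (f y) ≤ c * dist x y := hf x x.2 y y.2
      _ ≤ c.toNNReal * dist x y := by gcongr; exact le_max_left c 0
  obtain ⟨x, hxs, hfx, -⟩ := hK.exists_fixedPoint' hsc hsf hx₀ (edist_ne_top _ _)
  refine ⟨x, ⟨hxs, hfx⟩, fun y ⟨hys, hfy⟩ => dist_le_zero.mp ?_⟩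
  have h := hf y hys x hxs
  rw [hfy, hfx.eq] at h
  nlinarith [dist_nonneg (x := y) (y := x)]

section SimilarityMap

variable {𝕜 𝒰 : Type*} [NontriviallyNormedField 𝕜] [NormedAddCommGroup 𝒰] [NormedSpace 𝕜 𝒰]
  (J : 𝒰 →L[𝕜] 𝒰) (mulΓ Γmul : 𝒰 →L[𝕜] 𝒰 →L[𝕜] 𝒰) (B : 𝒰)

def similarityMap (X : 𝒰) : 𝒰 :=
  mulΓ B X - Γmul X (J B) - Γmul X (J (mulΓ B X)) + B

@[simp]
theorem similarityMap_zero : similarityMap J mulΓ Γmul B 0 = B := by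
  simp [similarityMap]

theorem similarityMap_sub_similarityMap (X Y : 𝒰) :
    similarityMap J mulΓ Γmul B X - similarityMap J mulΓ Γmul B Y =
      mulΓ B (X - Y) - Γmul (X - Y) (J B) - Γmul (X - Y) (J (mulΓ B X))
        - Γmul Y (J (mulΓ B (X - Y))) := by
  simp only [similarityMap, map_sub, sub_apply]
  abel

variable {γ : ℝ} (hγ : 0 ≤ γ) (hmulΓ : ∀ X Y : 𝒰, ‖mulΓ X Y‖ ≤ γ * ‖X‖ * ‖Y‖)
  (hΓmul : ∀ X Y : 𝒰, ‖Γmul X Y‖ ≤ γ * ‖X‖ * ‖Y‖)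
include hγ hmulΓ hΓmul

theorem norm_similarityMap_sub_le (X Y : 𝒰) :
    ‖similarityMap J mulΓ Γmul B X - similarityMap J mulΓ Γmul B Y‖ ≤
      γ * (‖B‖ + ‖J‖ * ‖B‖ + γ * ‖J‖ * ‖B‖ * (‖X‖ + ‖Y‖)) * ‖X - Y‖ := by
  have hJmulΓ : ∀ Z, ‖J (mulΓ B Z)‖ ≤ ‖J‖ * (γ * ‖B‖ * ‖Z‖) := fun Z =>
    (J.le_opNorm _).trans (by gcongr; exact hmulΓ B Z)
  have t₁ := hmulΓ B (X - Y)
  have t₂ : ‖Γmul (X - Y) (J B)‖ ≤ γ * ‖X - Y‖ * (‖J‖ * ‖B‖) :=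
    (hΓmul _ _).trans (by gcongr; exact J.le_opNorm B)
  have t₃ : ‖Γmul (X - Y) (J (mulΓ B X))‖ ≤ γ * ‖X - Y‖ * (‖J‖ * (γ * ‖B‖ * ‖X‖)) :=
    (hΓmul _ _).trans (by gcongr; exact hJmulΓ X)
  have t₄ : ‖Γmul Y (J (mulΓ B (X - Y)))‖ ≤ γ * ‖Y‖ * (‖J‖ * (γ * ‖B‖ * ‖X - Y‖)) :=
    (hΓmul _ _).trans (by gcongr; exact hJmulΓ (X - Y))
  rw [similarityMap_sub_similarityMap]
  linarith [norm_sub_le (mulΓ B (X - Y) - Γmul (X - Y) (J B) - Γmul (X - Y) (J (mulΓ B X)))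
      (Γmul Y (J (mulΓ B (X - Y)))),
    norm_sub_le (mulΓ B (X - Y) - Γmul (X - Y) (J B)) (Γmul (X - Y) (J (mulΓ B X))),
    norm_sub_le (mulΓ B (X - Y)) (Γmul (X - Y) (J B))]

variable (hJ : 1 ≤ ‖J‖)
include hJ

theorem norm_similarityMap_sub_le_of_mem_closedBall {X Y : 𝒰} (hX : X ∈ closedBall B (3 * ‖B‖))
    (hY : Y ∈ closedBall B (3 * ‖B‖)) :
    ‖similarityMap J mulΓ Γmul B X - similarityMap J mulΓ Γmul B Y‖ ≤
      (2 * (‖J‖ * ‖B‖ * γ) + 8 * (‖J‖ * ‖B‖ * γ) ^ 2) * ‖X - Y‖ := by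
  refine (norm_similarityMap_sub_le J mulΓ Γmul B hγ hmulΓ hΓmul X Y).trans ?_
  have hXY : ‖X‖ + ‖Y‖ ≤ 8 * ‖B‖ := by
    linarith [norm_le_of_mem_closedBall hX, norm_le_of_mem_closedBall hY]
  have hγB : γ * ‖B‖ ≤ γ * (‖J‖ * ‖B‖) := by gcongr; exact le_mul_of_one_le_left (norm_nonneg B) hJ
  have hγJB : 0 ≤ γ * (‖J‖ * ‖B‖) := by positivity
  gcongr
  nlinarith [mul_le_mul_of_nonneg_left hXY (mul_nonneg hγ hγJB)]

theorem mapsTo_similarityMap_closedBall (hsmall : ‖J‖ * ‖B‖ * γ < 1 / 4) :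
    MapsTo (similarityMap J mulΓ Γmul B) (closedBall B (3 * ‖B‖)) (closedBall B (3 * ‖B‖)) := by
  intro X hX
  have hXn : ‖X‖ ≤ 4 * ‖B‖ := by linarith [norm_le_of_mem_closedBall hX]
  have h := norm_similarityMap_sub_le J mulΓ Γmul B hγ hmulΓ hΓmul X 0
  rw [similarityMap_zero, norm_zero, add_zero, sub_zero] at h
  rw [mem_closedBall, dist_eq_norm]
  have hγB : γ * ‖B‖ ≤ γ * (‖J‖ * ‖B‖) := by gcongr; exact le_mul_of_one_le_left (norm_nonneg B) hJ
  have hγJB : 0 ≤ γ * (‖J‖ * ‖B‖) := by positivity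
  have hcoeff : γ * (‖B‖ + ‖J‖ * ‖B‖ + γ * ‖J‖ * ‖B‖ * ‖X‖) ≤ 3 / 4 := by
    nlinarith [mul_le_mul_of_nonneg_left hXn (mul_nonneg hγ hγJB),
      mul_le_mul_of_nonneg_left hγB hγJB]
  calc _ ≤ _ := h
    _ ≤ 3 / 4 * ‖X‖ := by gcongr
    _ ≤ 3 * ‖B‖ := by linarith

end SimilarityMap

/-- Abstract similarity theorem (method of similar operators): for an admissible
triple `(𝒰, J, Γ)` (with `X·ΓY` and `(ΓX)·Y` the admissible bilinear products, all
bounded by `γ‖X‖‖Y‖`, and `‖ΓX‖ ≤ γ‖X‖`) and `B ∈ 𝒰` with `‖J‖‖B‖γ < 1/4`, the map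
`Φ(X) = BΓX - (ΓX)(JB) - (ΓX)J(BΓX) + B` is a contraction on the closed ball
`{X : ‖X - B‖ ≤ 3‖B‖}`, has a unique fixed point `X*` there, and `I + ΓX*` is
invertible in `End(H)`. -/
theorem stmt_12 {H : Type*} [NormedAddCommGroup H] [InnerProductSpace ℂ H]
    [CompleteSpace H]
    {𝒰 : Type*} [NormedAddCommGroup 𝒰] [NormedSpace ℂ 𝒰] [CompleteSpace 𝒰]
    (Jc : 𝒰 →L[ℂ] 𝒰) (hJproj : Jc.comp Jc = Jc) (hJne : Jc ≠ 0)
    (Γc : 𝒰 →L[ℂ] (H →L[ℂ] H)) (γ : ℝ) (hγ : 0 < γ)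
    (hΓ : ∀ X : 𝒰, ‖Γc X‖ ≤ γ * ‖X‖)
    (mulΓ : 𝒰 →L[ℂ] 𝒰 →L[ℂ] 𝒰)   -- (X, Y) ↦ X·(ΓY)
    (Γmul : 𝒰 →L[ℂ] 𝒰 →L[ℂ] 𝒰)   -- (X, Y) ↦ (ΓX)·Y
    (hmulΓ : ∀ X Y : 𝒰, ‖mulΓ X Y‖ ≤ γ * ‖X‖ * ‖Y‖)
    (hΓmul : ∀ X Y : 𝒰, ‖Γmul X Y‖ ≤ γ * ‖X‖ * ‖Y‖)
    (B : 𝒰) (hsmall : ‖Jc‖ * ‖B‖ * γ < 1 / 4)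
    (Φ : 𝒰 → 𝒰)
    (hΦ : ∀ X : 𝒰, Φ X = mulΓ B X - Γmul X (Jc B) - Γmul X (Jc (mulΓ B X)) + B) :
    (∃ c : ℝ, c < 1 ∧ ∀ X ∈ Metric.closedBall B (3 * ‖B‖),
        ∀ Y ∈ Metric.closedBall B (3 * ‖B‖), ‖Φ X - Φ Y‖ ≤ c * ‖X - Y‖) ∧
      (∃! X : 𝒰, X ∈ Metric.closedBall B (3 * ‖B‖) ∧ Φ X = X) ∧
      (∀ X ∈ Metric.closedBall B (3 * ‖B‖), Φ X = X →
        IsUnit ((1 : H →L[ℂ] H) + Γc X)) := by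
  obtain rfl : Φ = similarityMap Jc mulΓ Γmul B := funext hΦ
  have hJ : 1 ≤ ‖Jc‖ := one_le_norm_of_isIdempotentElem hJproj hJne
  have hlip := fun X (hX : X ∈ closedBall B (3 * ‖B‖)) Y (hY : Y ∈ closedBall B (3 * ‖B‖)) =>
    norm_similarityMap_sub_le_of_mem_closedBall Jc mulΓ Γmul B hγ.le hmulΓ hΓmul hJ hX hY
  have hq : 0 ≤ ‖Jc‖ * ‖B‖ * γ := by positivity
  have hc : 2 * (‖Jc‖ * ‖B‖ * γ) + 8 * (‖Jc‖ * ‖B‖ * γ) ^ 2 < 1 := by nlinarith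
  refine ⟨⟨_, hc, hlip⟩, ?_, fun X hX _ => isUnit_one_add_of_norm_lt_one ?_⟩
  · refine existsUnique_fixedPoint_of_dist_le isClosed_closedBall.isComplete
      ⟨B, mem_closedBall_self (by positivity)⟩
      (mapsTo_similarityMap_closedBall Jc mulΓ Γmul B hγ.le hmulΓ hΓmul hJ hsmall) hc ?_
    simpa only [dist_eq_norm] using hlip
  · have hXn : ‖X‖ ≤ 4 * ‖B‖ := by linarith [norm_le_of_mem_closedBall hX]
    calc ‖Γc X‖ ≤ γ * ‖X‖ := hΓ X
      _ ≤ γ * (4 * ‖B‖) := by gcongr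
      _ ≤ 4 * (‖Jc‖ * ‖B‖ * γ) := by nlinarith [mul_nonneg hγ.le (norm_nonneg B)]
      _ < 1 := by linarith
end

section
/- Let (q_p)_{p∈ℤ} ∈ ℓ²(ℤ), k ≥ 2, θ ∈ {0,1}. Then the quantity T = Σ_{n∈ℤ} Σ_{p∈ℤ, λ_p≠λ_n} | Σ_{j: λ_j≠λ_p} q_{n-j}q_{j-p}/((2j+θ)^{2k}-(2p+θ)^{2k}) |², restricted to a single row n (i.e. the inner double sum over p for fixed n), is bounded by a constant C depending only on k, θ, ω, and ‖q‖₂, uniformly in n. -/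
/-!
If `a ≡ b (mod 2)` and `a^2 ≠ b^2`, both factors of `a^2 - b^2 = (a - b)(a + b)` are nonzero and
even, so `|a^2 - b^2| ≥ 4`; the geometric sum for `x^k - y^k` with `x = a^2`, `y = b^2` then gives
`|a^(2k) - b^(2k)| ≥ 4 b^(2k-2)`. With `a = 2j + θ`, `b = 2p + θ`, every coefficient of the inner
sum is therefore at most `(max 1 (4 b^(2k-2)))⁻¹` in modulus, and `2|xy| ≤ x^2 + y^2` bounds the
inner sum by that weight times `‖q‖₂²`. The squared weights are summable in `p` because
`4k - 4 > 1`.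
-/
theorem pow_pred_mul_abs_sub_le_abs_pow_sub_pow {R : Type*} [CommRing R] [LinearOrder R]
    [IsStrictOrderedRing R] {x y : R} (hx : 0 ≤ x) (hy : 0 ≤ y) {k : ℕ} (hk : k ≠ 0) :
    y ^ (k - 1) * |x - y| ≤ |x ^ k - y ^ k| := by
  have hterm : ∀ i ∈ Finset.range k, 0 ≤ x ^ i * y ^ (k - 1 - i) := fun i _ => by positivity
  have hsum : y ^ (k - 1) ≤ ∑ i ∈ Finset.range k, x ^ i * y ^ (k - 1 - i) := by
    simpa using Finset.single_le_sum hterm (Finset.mem_range.mpr (Nat.pos_of_ne_zero hk))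
  rw [← geom_sum₂_mul, abs_mul, abs_of_nonneg (Finset.sum_nonneg hterm)]
  exact mul_le_mul_of_nonneg_right hsum (abs_nonneg _)

theorem four_le_abs_sq_sub_sq {a b : ℤ} (hab : Even (a - b)) (hne : a ^ 2 ≠ b ^ 2) :
    4 ≤ |a ^ 2 - b ^ 2| := by
  obtain ⟨m, hm⟩ := hab
  have hsub : 2 ≤ |a - b| := by
    have : a - b ≠ 0 := fun h => hne (by rw [sub_eq_zero.mp h])
    rcases abs_cases (a - b) with ⟨h, _⟩ | ⟨h, _⟩ <;> omega
  have hadd : 2 ≤ |a + b| := by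
    have : a + b ≠ 0 := fun h => hne (by rw [eq_neg_of_add_eq_zero_left h, neg_sq])
    rcases abs_cases (a + b) with ⟨h, _⟩ | ⟨h, _⟩ <;> omega
  calc (4 : ℤ) = 2 * 2 := by norm_num
    _ ≤ |a - b| * |a + b| := mul_le_mul hsub hadd (by norm_num) (abs_nonneg _)
    _ = |a ^ 2 - b ^ 2| := by rw [← abs_mul]; ring_nf

theorem four_mul_pow_le_abs_pow_sub_pow {a b : ℤ} (hab : Even (a - b)) {k : ℕ}
    (hne : a ^ (2 * k) ≠ b ^ (2 * k)) : 4 * b ^ (2 * (k - 1)) ≤ |a ^ (2 * k) - b ^ (2 * k)| := by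
  have hk : k ≠ 0 := by rintro rfl; simp at hne
  simp only [pow_mul] at hne ⊢
  have hsq : a ^ 2 ≠ b ^ 2 := fun h => hne (by rw [h])
  calc 4 * (b ^ 2) ^ (k - 1) = (b ^ 2) ^ (k - 1) * 4 := mul_comm _ _
    _ ≤ (b ^ 2) ^ (k - 1) * |a ^ 2 - b ^ 2| :=
      mul_le_mul_of_nonneg_left (four_le_abs_sq_sub_sq hab hsq) (by positivity)
    _ ≤ |(a ^ 2) ^ k - (b ^ 2) ^ k| :=
      pow_pred_mul_abs_sub_le_abs_pow_sub_pow (sq_nonneg a) (sq_nonneg b) hk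

/-- The `max 1` is for `b = 0`, where a nonzero integer gap is only known to be at least `1`. -/
noncomputable def invGapBound (k : ℕ) (b : ℤ) : ℝ := (max 1 (4 * (b : ℝ) ^ (2 * (k - 1))))⁻¹

theorem invGapBound_nonneg (k : ℕ) (b : ℤ) : 0 ≤ invGapBound k b := by
  unfold invGapBound; positivity

theorem norm_inv_pow_sub_pow_le {a b : ℤ} (hab : Even (a - b)) (k : ℕ) :
    ‖((a : ℂ) ^ (2 * k) - (b : ℂ) ^ (2 * k))⁻¹‖ ≤ invGapBound k b := by
  by_cases h : a ^ (2 * k) = b ^ (2 * k)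
  · have : (a : ℂ) ^ (2 * k) - (b : ℂ) ^ (2 * k) = 0 := by exact_mod_cast sub_eq_zero.mpr h
    rw [this, inv_zero, norm_zero]
    exact invGapBound_nonneg k b
  · have hcast : (a : ℂ) ^ (2 * k) - (b : ℂ) ^ (2 * k) = ((a ^ (2 * k) - b ^ (2 * k) : ℤ) : ℂ) := by
      push_cast; ring
    rw [hcast, norm_inv, Complex.norm_intCast]
    apply inv_anti₀ (by positivity)
    apply max_le
    · exact_mod_cast Int.one_le_abs (sub_ne_zero.mpr h)
    · exact_mod_cast four_mul_pow_le_abs_pow_sub_pow hab h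

theorem summable_invGapBound_sq {k : ℕ} (hk : 2 ≤ k) :
    Summable fun b : ℤ => invGapBound k b ^ 2 := by
  refine Summable.of_norm_bounded_eventually
    (Real.summable_one_div_int_pow.mpr (by omega : 1 < 2 * (2 * (k - 1)))) ?_
  filter_upwards [Set.Finite.compl_mem_cofinite (Set.finite_singleton (0 : ℤ))] with b hb
  have hpos : (0 : ℝ) < (b : ℝ) ^ (2 * (k - 1)) :=
    (even_two_mul _).pow_pos (by exact_mod_cast hb)
  rw [Real.norm_of_nonneg (sq_nonneg _), pow_mul' _ 2, one_div, ← inv_pow]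
  refine pow_le_pow_left₀ (invGapBound_nonneg k b) ?_ 2
  exact inv_anti₀ hpos ((by linarith : _ ≤ 4 * (b : ℝ) ^ (2 * (k - 1))).trans (le_max_right _ _))

section Convolution

variable {E : Type*} [SeminormedRing E] {q : ℤ → E}

theorem hasSum_avg_norm_sq_shift (hq : Summable fun i => ‖q i‖ ^ 2) (n p : ℤ) :
    HasSum (fun j => (‖q (n - j)‖ ^ 2 + ‖q (j - p)‖ ^ 2) / 2) (∑' i, ‖q i‖ ^ 2) := by
  have hleft : HasSum (fun j => ‖q (n - j)‖ ^ 2) (∑' i, ‖q i‖ ^ 2) :=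
    (Equiv.subLeft n).hasSum_iff (f := fun i => ‖q i‖ ^ 2) |>.mpr hq.hasSum
  have hright : HasSum (fun j => ‖q (j - p)‖ ^ 2) (∑' i, ‖q i‖ ^ 2) :=
    (Equiv.subRight p).hasSum_iff (f := fun i => ‖q i‖ ^ 2) |>.mpr hq.hasSum
  simpa only [add_self_div_two] using (hleft.add hright).div_const 2

theorem norm_tsum_shift_mul_le (hq : Summable fun i => ‖q i‖ ^ 2) (n p : ℤ) {c : ℤ → E} {M : ℝ}
    (hc : ∀ j, ‖c j‖ ≤ M) :
    ‖∑' j, q (n - j) * q (j - p) * c j‖ ≤ M * ∑' i, ‖q i‖ ^ 2 := by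
  have hM : 0 ≤ M := (norm_nonneg _).trans (hc 0)
  have havg := hasSum_avg_norm_sq_shift hq n p
  have hterm : ∀ j,
      ‖q (n - j) * q (j - p) * c j‖ ≤ M * ((‖q (n - j)‖ ^ 2 + ‖q (j - p)‖ ^ 2) / 2) :=
    fun j => calc
      ‖q (n - j) * q (j - p) * c j‖ ≤ ‖q (n - j)‖ * ‖q (j - p)‖ * ‖c j‖ := norm_mul₃_le
      _ ≤ (‖q (n - j)‖ ^ 2 + ‖q (j - p)‖ ^ 2) / 2 * M := by
        gcongr
        · linarith [two_mul_le_add_sq ‖q (n - j)‖ ‖q (j - p)‖]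
        · exact hc j
      _ = _ := mul_comm _ _
  have hsum := Summable.of_nonneg_of_le (fun j => norm_nonneg _) hterm (havg.summable.mul_left M)
  calc ‖∑' j, q (n - j) * q (j - p) * c j‖ ≤ ∑' j, ‖q (n - j) * q (j - p) * c j‖ :=
        norm_tsum_le_tsum_norm hsum
    _ ≤ ∑' j, M * ((‖q (n - j)‖ ^ 2 + ‖q (j - p)‖ ^ 2) / 2) :=
        hsum.tsum_le_tsum hterm (havg.summable.mul_left M)
    _ = M * ∑' i, ‖q i‖ ^ 2 := by rw [tsum_mul_left, havg.tsum_eq]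

end Convolution

theorem norm_tsum_ite_div_pow_sub_pow_le {q : ℤ → ℂ} (hq : Summable fun i => ‖q i‖ ^ 2)
    (k θ : ℕ) (n p : ℤ) :
    ‖∑' j : ℤ, (if (2 * j + (θ : ℤ)) ^ (2 * k) ≠ (2 * p + (θ : ℤ)) ^ (2 * k) then
        q (n - j) * q (j - p) / ((2 * (j : ℂ) + θ) ^ (2 * k) - (2 * (p : ℂ) + θ) ^ (2 * k))
      else 0)‖ ≤ invGapBound k (2 * p + θ) * ∑' i, ‖q i‖ ^ 2 := by
  have hgap (j : ℤ) := norm_inv_pow_sub_pow_le (a := 2 * j + θ) (b := 2 * p + θ) ⟨j - p, by ring⟩ k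
  push_cast at hgap
  refine (le_of_eq ?_).trans (norm_tsum_shift_mul_le hq n p hgap)
  congr 1
  refine tsum_congr fun j => ?_
  -- the `if` is redundant: a vanishing denominator already gives `x / 0 = 0`
  split_ifs with h
  · exact div_eq_mul_inv _ _
  · have : (2 * (j : ℂ) + θ) ^ (2 * k) - (2 * (p : ℂ) + θ) ^ (2 * k) = 0 := by
      rw [not_not] at h; exact_mod_cast sub_eq_zero.mpr h
    rw [this, inv_zero, mul_zero]

theorem stmt_14_general (k : ℕ) (hk : 2 ≤ k) (θ : ℕ) (q : ℤ → ℂ) (hq : Summable fun p : ℤ => ‖q p‖ ^ 2) :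
    ∃ C > 0, ∀ n : ℤ,
      (∑' p : ℤ,
        if (2 * p + (θ : ℤ)) ^ (2 * k) ≠ (2 * n + (θ : ℤ)) ^ (2 * k) then
          ‖∑' j : ℤ, (if (2 * j + (θ : ℤ)) ^ (2 * k) ≠ (2 * p + (θ : ℤ)) ^ (2 * k) then
              q (n - j) * q (j - p) /
                ((2 * (j : ℂ) + θ) ^ (2 * k) - (2 * (p : ℂ) + θ) ^ (2 * k))
            else 0)‖ ^ 2
        else 0) ≤ C := by
  set S := ∑' i, ‖q i‖ ^ 2
  have hw : Summable fun p : ℤ => invGapBound k (2 * p + θ) ^ 2 :=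
    (summable_invGapBound_sq hk).comp_injective fun p₁ p₂ h => by simpa using h
  refine ⟨S ^ 2 * ∑' p : ℤ, invGapBound k (2 * p + θ) ^ 2 + 1, by positivity, fun n => ?_⟩
  refine tsum_le_of_sum_le' (by positivity) fun s => ?_
  calc _ ≤ ∑ p ∈ s, S ^ 2 * invGapBound k (2 * p + θ) ^ 2 := Finset.sum_le_sum fun p _ => ?_
    _ ≤ S ^ 2 * ∑' p : ℤ, invGapBound k (2 * p + θ) ^ 2 := by
      rw [← Finset.mul_sum]
      gcongr
      exact hw.sum_le_tsum s fun p _ => sq_nonneg _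
    _ ≤ _ := le_add_of_nonneg_right zero_le_one
  split_ifs
  · calc _ ≤ (invGapBound k (2 * p + θ) * S) ^ 2 :=
          pow_le_pow_left₀ (norm_nonneg _) (norm_tsum_ite_div_pow_sub_pow_le hq k θ n p) 2
      _ = _ := by ring
  · positivity

/-- Uniform row estimate `‖P_n(QΓQ)‖₂ ≤ C`: the inner double sum
`Σ_{p: λ_p≠λ_n} |Σ_{j: λ_j≠λ_p} q_{n-j}q_{j-p}/((2j+θ)^{2k}-(2p+θ)^{2k})|²`
is bounded by a constant depending only on `k`, `θ`, `ω`, `‖q‖₂`, uniformly in `n`. -/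
theorem stmt_14 (k : ℕ) (hk : 2 ≤ k) (θ : ℕ) (hθ : θ = 0 ∨ θ = 1)
    (ω : ℝ) (hω : 0 < ω) (q : ℤ → ℂ) (hq : Summable fun p : ℤ => ‖q p‖ ^ 2) :
    ∃ C > 0, ∀ n : ℤ,
      (∑' p : ℤ,
        if (2 * p + (θ : ℤ)) ^ (2 * k) ≠ (2 * n + (θ : ℤ)) ^ (2 * k) then
          ‖∑' j : ℤ, (if (2 * j + (θ : ℤ)) ^ (2 * k) ≠ (2 * p + (θ : ℤ)) ^ (2 * k) then
              q (n - j) * q (j - p) /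
                ((2 * (j : ℂ) + θ) ^ (2 * k) - (2 * (p : ℂ) + θ) ^ (2 * k))
            else 0)‖ ^ 2
        else 0) ≤ C :=
  stmt_14_general k hk θ q hq
end
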